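/- Assume Hypotheses 1, 2, 3 and 7. Then there is at most one monotone solution of the impulse-control master equation; moreover, if such a solution exists, it is a monotone map on O_d. -/

import Mathlib

/-!
Doubling of variables. For monotone solutions `U`, `W` let `μ` be the minimum of
`Φ(x, y) = ⟪U x - W y, x - y⟫` on `B_R × B_R`. By Stegall's variational principle (Rademacher's
theorem applied to the concave envelope `v ↦ min (Φ + ⟪v, ·⟫)`), an arbitrarily small linear
perturbation `(w₁, w₂)` makes the minimum strict at some `(x₀, y₀)`. Then `x₀` is a strict
minimizer of `x ↦ ⟪U x - (W y₀ - w₁), x - y₀⟫`, and symmetrically for `y₀`, so both solution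
inequalities apply; adding them and using Hypothesis 3 and `T(B_R) ⊆ B_R` gives `r μ ≥ -O(|w|)`.
The test vectors `W y₀ - w₁` satisfy `V ≤ MV` as soon as `w₁` is nonincreasing along every
finite-cost jump. By Hypothesis 7 these jumps form an acyclic graph, which carries a strictly
decreasing potential `h`, so every `w` close to `δ h` qualifies: the perturbation is sought there.

Hence `⟪U x - W y, x - y⟫ ≥ 0` on `O_d`. With `W = U` this is monotonicity; letting
`y = x + t eᵢ → x` gives `U x ≤ W x` coordinatewise, hence `U = W` by symmetry.
-/

open scoped RealInnerProductSpace
noncomputable section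

/-- `ℝ^d` with the Euclidean inner product. -/
abbrev Euc (d : ℕ) := EuclideanSpace ℝ (Fin d)

/-- The positive orthant `O_d = (ℝ≥0)^d`. -/
def Od (d : ℕ) : Set (Euc d) := {x | ∀ i, 0 ≤ x i}

/-- `B_R = {x ∈ O_d : x_1 + ... + x_d ≤ R}`. -/
def Ball1 (d : ℕ) (R : ℝ) : Set (Euc d) := {x | x ∈ Od d ∧ ∑ i, x i ≤ R}

/-- `p ≤ Mq` for the jump operator with (possibly infinite) costs `k : (0, +∞]`:
`pⁱ ≤ k_{ij} + qʲ` for all `i, j` (automatic in coordinates where `k_{ij} = ∞`). -/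
def leJump (d : ℕ) (k : Fin d → Fin d → EReal) (p q : Euc d) : Prop :=
  ∀ i j, (p i : EReal) ≤ k i j + (q j : EReal)

/-- Monotone solution of the master equation for the MFG of impulse control
(Definition 4.1): `U ≤ MU` on `O_d`, and the monotone-solution inequality holds for all test
vectors `V ≤ MV`, with threshold `R₁ ≥ R₀` where `R₀` is the constant of Hypothesis 2. -/
def IsMonotoneSolIC (d : ℕ) (k : Fin d → Fin d → EReal) (F G : Euc d → Euc d → Euc d)
    (r lam : ℝ) (T : Euc d →L[ℝ] Euc d) (R₀ : ℝ) (U : Euc d → Euc d) : Prop :=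
  ContinuousOn U (Od d) ∧
  (∀ x ∈ Od d, leJump d k (U x) (U x)) ∧
  ∃ R₁ ≥ R₀, ∀ R ≥ R₁, ∀ V : Euc d, leJump d k V V → ∀ y ∈ Od d, ∀ x₀ ∈ Ball1 d R,
    (∀ x ∈ Ball1 d R, x ≠ x₀ → ⟪U x₀ - V, x₀ - y⟫ < ⟪U x - V, x - y⟫) →
    ⟪G x₀ (U x₀), x₀ - y⟫ + ⟪F x₀ (U x₀), U x₀ - V⟫ ≤
      r * ⟪U x₀, x₀ - y⟫
        + lam * ⟪U x₀ - ContinuousLinearMap.adjoint T (U (T x₀)), x₀ - y⟫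

open Filter Topology

section Stegall

variable {E : Type*} [NormedAddCommGroup E] [InnerProductSpace ℝ E]

theorem LipschitzWith.dense_differentiableAt [FiniteDimensional ℝ E] {F : Type*}
    [NormedAddCommGroup F] [NormedSpace ℝ F] [FiniteDimensional ℝ F] {C : NNReal} {g : E → F}
    (hg : LipschitzWith C g) : Dense {v | DifferentiableAt ℝ g v} := by
  borelize E
  exact MeasureTheory.Measure.dense_of_ae
    (hg.ae_differentiableAt (μ := (Module.finBasis ℝ E).addHaar))

def infAddInner (K : Set E) (f : E → ℝ) (v : E) : ℝ :=
  sInf ((fun x => f x + ⟪v, x⟫) '' K)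

variable {K : Set E} {f : E → ℝ}

theorem IsCompact.image_add_inner (hK : IsCompact K) (hf : ContinuousOn f K) (v : E) :
    IsCompact ((fun x => f x + ⟪v, x⟫) '' K) :=
  hK.image_of_continuousOn (hf.add (continuous_const.inner continuous_id).continuousOn)

theorem infAddInner_le (hK : IsCompact K) (hf : ContinuousOn f K) (v : E) {x : E}
    (hx : x ∈ K) : infAddInner K f v ≤ f x + ⟪v, x⟫ :=
  csInf_le (hK.image_add_inner hf v).bddBelow ⟨x, hx, rfl⟩

theorem exists_infAddInner_eq (hK : IsCompact K) (hne : K.Nonempty) (hf : ContinuousOn f K)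
    (v : E) : ∃ x ∈ K, f x + ⟪v, x⟫ = infAddInner K f v :=
  (hK.image_add_inner hf v).sInf_mem (hne.image _)

theorem lipschitzWith_infAddInner (hK : IsCompact K) (hne : K.Nonempty) (hf : ContinuousOn f K)
    {C : ℝ} (hC : ∀ x ∈ K, ‖x‖ ≤ C) : LipschitzWith C.toNNReal (infAddInner K f) := by
  refine LipschitzWith.of_le_add_mul' C fun v w => ?_
  obtain ⟨x, hx, hxw⟩ := exists_infAddInner_eq hK hne hf w
  have hvw : ⟪v - w, x⟫ ≤ C * dist v w := by
    rw [dist_eq_norm, mul_comm]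
    exact (real_inner_le_norm _ _).trans (mul_le_mul_of_nonneg_left (hC x hx) (norm_nonneg _))
  calc infAddInner K f v ≤ f x + ⟪v, x⟫ := infAddInner_le hK hf v hx
    _ = infAddInner K f w + ⟪v - w, x⟫ := by rw [← hxw, inner_sub_left]; ring
    _ ≤ infAddInner K f w + C * dist v w := by linarith

theorem fderiv_infAddInner_eq (hK : IsCompact K) (hf : ContinuousOn f K) {v x : E} (hx : x ∈ K)
    (hmin : f x + ⟪v, x⟫ = infAddInner K f v) (hv : DifferentiableAt ℝ (infAddInner K f) v) :
    fderiv ℝ (infAddInner K f) v = innerSL ℝ x := by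
  have hlocal : IsLocalMin (fun w => ⟪x, w⟫ - infAddInner K f w) v :=
    Filter.Eventually.of_forall fun w => by
      linarith [infAddInner_le hK hf w hx, real_inner_comm x v, real_inner_comm x w]
  have hderiv := hlocal.hasFDerivAt_eq_zero ((innerSL ℝ x).hasFDerivAt.sub hv.hasFDerivAt)
  exact (sub_eq_zero.mp hderiv).symm

/-- Stegall's variational principle in finite dimension. -/
theorem exists_strictMinOn_add_inner [FiniteDimensional ℝ E] (hK : IsCompact K)
    (hne : K.Nonempty) (hf : ContinuousOn f K) (v₀ : E) {ε : ℝ} (hε : 0 < ε) :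
    ∃ v ∈ Metric.ball v₀ ε, ∃ x₀ ∈ K, ∀ x ∈ K, x ≠ x₀ → f x₀ + ⟪v, x₀⟫ < f x + ⟪v, x⟫ := by
  obtain ⟨C, hC⟩ := hK.isBounded.exists_norm_le
  obtain ⟨v, hv, hvball⟩ := (lipschitzWith_infAddInner hK hne hf hC).dense_differentiableAt
    |>.exists_mem_open Metric.isOpen_ball (Metric.nonempty_ball.mpr hε)
  obtain ⟨x₀, hx₀, hx₀min⟩ := exists_infAddInner_eq hK hne hf v
  refine ⟨v, hvball, x₀, hx₀, fun x hx hne => (hx₀min ▸ infAddInner_le hK hf v hx).lt_of_ne ?_⟩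
  intro hxmin
  have h := (fderiv_infAddInner_eq hK hf hx (hxmin.symm.trans hx₀min) hv).symm.trans
    (fderiv_infAddInner_eq hK hf hx₀ hx₀min hv)
  exact hne (ext_inner_right ℝ fun u => by simpa using congrArg (· u) h)

theorem exists_strictMinOn_add_inner_prod {F : Type*} [NormedAddCommGroup F] [InnerProductSpace ℝ F]
    [FiniteDimensional ℝ E] [FiniteDimensional ℝ F] {K : Set (E × F)} {f : E × F → ℝ}
    (hK : IsCompact K) (hne : K.Nonempty) (hf : ContinuousOn f K) (a : E) (b : F) {ε : ℝ}
    (hε : 0 < ε) :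
    ∃ w₁ w₂, ‖w₁ - a‖ < ε ∧ ‖w₂ - b‖ < ε ∧ ∃ p ∈ K, ∀ q ∈ K, q ≠ p →
      f p + (⟪w₁, p.1⟫ + ⟪w₂, p.2⟫) < f q + (⟪w₁, q.1⟫ + ⟪w₂, q.2⟫) := by
  let e := WithLp.prodContinuousLinearEquiv 2 ℝ E F
  obtain ⟨v, hv, p, hp, hmin⟩ := exists_strictMinOn_add_inner
    (e.toHomeomorph.isCompact_preimage.mpr hK) (hne.preimage e.surjective)
    (hf.comp e.continuous.continuousOn fun _ h => h) (WithLp.toLp 2 (a, b)) hε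
  rw [Metric.mem_ball, dist_eq_norm] at hv
  refine ⟨v.fst, v.snd, ?_, ?_, e p, hp, fun q hq hqp => ?_⟩
  · simpa using (WithLp.norm_fst_le (x := v - WithLp.toLp 2 (a, b))).trans_lt hv
  · simpa using (WithLp.norm_snd_le (x := v - WithLp.toLp 2 (a, b))).trans_lt hv
  have := hmin (e.symm q) (by simpa using hq) (by rintro rfl; simp at hqp)
  simpa [e, WithLp.prodContinuousLinearEquiv_symm_apply] using this

end Stegall

theorem Relation.TransGen.exists_seq {α : Type*} {rel : α → α → Prop} {i j : α}
    (h : Relation.TransGen rel i j) :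
    ∃ n, ∃ s : ℕ → α, s 0 = i ∧ s (n + 1) = j ∧ ∀ m ≤ n, rel (s m) (s (m + 1)) := by
  induction h with
  | single hij => exact ⟨0, fun m => if m = 0 then i else _, rfl, rfl, by simpa using hij⟩
  | @tail b c _ hbc ih =>
    obtain ⟨n, s, hs0, hsn, hs⟩ := ih
    refine ⟨n + 1, Function.update s (n + 2) c, by simpa using hs0, by simp, fun m hm => ?_⟩
    rcases hm.lt_or_eq with hm | rfl
    · rw [Function.update_of_ne (by omega), Function.update_of_ne (by omega)]
      exact hs m (by omega)
    · simpa [hsn] using hbc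

theorem exists_nat_potential_of_acyclic {α : Type*} [Finite α] {rel : α → α → Prop}
    (h : ∀ i, ¬ Relation.TransGen rel i i) : ∃ φ : α → ℕ, ∀ i j, rel i j → φ j < φ i := by
  refine ⟨fun i => Set.ncard {m | Relation.TransGen rel i m}, fun i j hij => ?_⟩
  refine Set.ncard_lt_ncard ⟨fun m hm => Relation.TransGen.head hij hm, fun hsub => h j ?_⟩
    (Set.toFinite _)
  exact hsub (Relation.TransGen.single hij)

theorem not_transGen_self_of_no_cycle {d : ℕ} {k : Fin d → Fin d → EReal}
    (hyp7 : ∀ (n : ℕ) (s : ℕ → Fin d), s (n + 1) = s 0 →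
      (∀ m ≤ n, k (s m) (s (m + 1)) ≠ ⊤) → ∀ m ≤ n + 1, s m = s 0) (i : Fin d) :
    ¬ Relation.TransGen (fun i j => i ≠ j ∧ k i j ≠ ⊤) i i := by
  intro hcyc
  obtain ⟨n, s, hs0, hsn, hs⟩ := hcyc.exists_seq
  have hs1 := hyp7 n s (hsn.trans hs0.symm) (fun m hm => (hs m hm).2) 1 (by omega)
  exact (hs 0 n.zero_le).1 hs1.symm

theorem exists_ball_subset_strictAnti_of_acyclic {ι : Type*} [Fintype ι] {rel : ι → ι → Prop}
    (hrel : ∀ i, ¬ Relation.TransGen rel i i) {η : ℝ} (hη : 0 < η) :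
    ∃ c : EuclideanSpace ℝ ι, ∃ ε > 0, ∀ w ∈ Metric.ball c ε,
      ‖w‖ < η ∧ ∀ i j, rel i j → w j < w i := by
  obtain ⟨φ, hφ⟩ := exists_nat_potential_of_acyclic hrel
  set h : EuclideanSpace ℝ ι := WithLp.toLp 2 fun i => (φ i : ℝ)
  set δ := η / (2 * (‖h‖ + 1))
  have hδ : 0 < δ := by positivity
  have hδη : δ * (‖h‖ + 1) = η / 2 := by simp only [δ]; field_simp
  refine ⟨δ • h, δ / 2, half_pos hδ, fun w hw => ⟨?_, fun i j hij => ?_⟩⟩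
  · rw [Metric.mem_ball, dist_eq_norm] at hw
    have hc : ‖δ • h‖ = δ * ‖h‖ := by rw [norm_smul, Real.norm_of_nonneg hδ.le]
    calc ‖w‖ ≤ ‖w - δ • h‖ + ‖δ • h‖ := norm_le_norm_sub_add w (δ • h)
      _ < δ * (‖h‖ + 1) := by rw [hc]; linarith
      _ < η := by linarith
  · have hcoord : ∀ m, |w m - δ * φ m| < δ / 2 := fun m => by
      rw [Metric.mem_ball, dist_eq_norm] at hw
      simpa [h] using (PiLp.norm_apply_le (w - δ • h) m).trans_lt hw
    have hφij : (φ j : ℝ) + 1 ≤ φ i := by exact_mod_cast hφ i j hij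
    have hi := abs_lt.mp (hcoord i)
    have hj := abs_lt.mp (hcoord j)
    nlinarith

theorem inner_sub_le_zero_of_forall_inner_nonneg {E : Type*} [NormedAddCommGroup E]
    [InnerProductSpace ℝ E] {S : Set E} {V : E → E} {x e u : E} (hV : ContinuousWithinAt V S x)
    (he : ∀ t : ℝ, 0 < t → x + t • e ∈ S) (hmono : ∀ y ∈ S, 0 ≤ ⟪u - V y, x - y⟫) :
    ⟪u - V x, e⟫ ≤ 0 := by
  have hpath : Tendsto (fun t : ℝ => x + t • e) (𝓝[>] 0) (𝓝[S] x) :=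
    tendsto_nhdsWithin_of_tendsto_nhds_of_eventually_within _
      (((continuous_const.add (continuous_id.smul continuous_const)).tendsto' 0 x
        (by simp)).mono_left nhdsWithin_le_nhds)
      (eventually_nhdsWithin_of_forall he)
  refine le_of_tendsto ((tendsto_const_nhds.sub (hV.tendsto.comp hpath)).inner tendsto_const_nhds)
    (eventually_nhdsWithin_of_forall fun t (ht : 0 < t) => ?_)
  show ⟪u - V (x + t • e), e⟫ ≤ 0
  have h := hmono _ (he t ht)
  rw [show x - (x + t • e) = (-t) • e by module, real_inner_smul_right] at h
  nlinarith

theorem apply_le_of_forall_inner_nonneg {d : ℕ} {V : Euc d → Euc d} {x u : Euc d}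
    (hV : ContinuousWithinAt V (Od d) x) (hmono : ∀ y ∈ Od d, 0 ≤ ⟪u - V y, x - y⟫)
    (hx : x ∈ Od d) (i : Fin d) : u i ≤ V x i := by
  have he : ∀ t : ℝ, 0 < t → x + t • EuclideanSpace.single i 1 ∈ Od d := fun t ht j => by
    have := hx j
    by_cases hj : j = i <;> simp [hj] at this ⊢ <;> linarith
  simpa [EuclideanSpace.inner_single_right, sub_nonpos] using
    inner_sub_le_zero_of_forall_inner_nonneg hV he hmono

theorem norm_le_of_mem_Ball1 {d : ℕ} {R : ℝ} {x : Euc d} (hx : x ∈ Ball1 d R) : ‖x‖ ≤ R := by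
  have hsum : 0 ≤ ∑ i, x i := Finset.sum_nonneg fun i _ => hx.1 i
  refine (pow_le_pow_iff_left₀ (norm_nonneg x) (hsum.trans hx.2) two_ne_zero).mp ?_
  calc ‖x‖ ^ 2 = ∑ i, x i ^ 2 := by simp [EuclideanSpace.norm_sq_eq]
    _ ≤ (∑ i, x i) ^ 2 := Finset.sum_sq_le_sq_sum_of_nonneg fun i _ => hx.1 i
    _ ≤ R ^ 2 := pow_le_pow_left₀ hsum hx.2 2

theorem isClosed_Od (d : ℕ) : IsClosed (Od d) := by
  simp only [Od, Set.ofPred_forall]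
  exact isClosed_iInter fun i => isClosed_le continuous_const (EuclideanSpace.proj i).continuous

theorem isCompact_Ball1 (d : ℕ) (R : ℝ) : IsCompact (Ball1 d R) :=
  (isCompact_closedBall (0 : Euc d) R).of_isClosed_subset
    ((isClosed_Od d).inter (isClosed_le
      (continuous_finsetSum _ fun i _ => (EuclideanSpace.proj i).continuous) continuous_const))
    fun _ hx => mem_closedBall_zero_iff.mpr (norm_le_of_mem_Ball1 hx)

theorem leJump_sub {d : ℕ} {k : Fin d → Fin d → EReal} {p w : Euc d} (hp : leJump d k p p)
    (hw : ∀ i j, k i j ≠ ⊤ → w j ≤ w i) : leJump d k (p - w) (p - w) := by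
  intro i j
  rcases eq_or_ne (k i j) ⊤ with hk | hk
  · rw [hk, EReal.top_add_coe]
    exact le_top
  calc (((p - w) i : ℝ) : EReal) = p i + ((-w i : ℝ) : EReal) := by simp [sub_eq_add_neg]
    _ ≤ k i j + p j + ((-w i : ℝ) : EReal) := by gcongr; exact hp i j
    _ ≤ k i j + ((p - w) j : ℝ) := by
        rw [add_assoc, ← EReal.coe_add]
        gcongr
        simp only [PiLp.sub_apply]
        linarith [hw i j hk]

section MasterEquation

variable {d : ℕ} {k : Fin d → Fin d → EReal} {F G : Euc d → Euc d → Euc d} {r lam : ℝ}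
  {T : Euc d →L[ℝ] Euc d}

/-- Clause (ii) of `IsMonotoneSolIC` at the radius `R`. -/
def MasterIneqOnBall (d : ℕ) (k : Fin d → Fin d → EReal) (F G : Euc d → Euc d → Euc d)
    (r lam : ℝ) (T : Euc d →L[ℝ] Euc d) (U : Euc d → Euc d) (R : ℝ) : Prop :=
  ∀ V : Euc d, leJump d k V V → ∀ y ∈ Od d, ∀ x₀ ∈ Ball1 d R,
    (∀ x ∈ Ball1 d R, x ≠ x₀ → ⟪U x₀ - V, x₀ - y⟫ < ⟪U x - V, x - y⟫) →
    ⟪G x₀ (U x₀), x₀ - y⟫ + ⟪F x₀ (U x₀), U x₀ - V⟫ ≤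
      r * ⟪U x₀, x₀ - y⟫
        + lam * ⟪U x₀ - ContinuousLinearMap.adjoint T (U (T x₀)), x₀ - y⟫

def crossPairing (U W : Euc d → Euc d) (p : Euc d × Euc d) : ℝ :=
  ⟪U p.1 - W p.2, p.1 - p.2⟫

theorem continuousOn_crossPairing {U W : Euc d → Euc d} (hU : ContinuousOn U (Od d))
    (hW : ContinuousOn W (Od d)) {R : ℝ} :
    ContinuousOn (crossPairing U W) (Ball1 d R ×ˢ Ball1 d R) :=
  ((hU.comp continuousOn_fst fun _ hp => hp.1.1).sub
    (hW.comp continuousOn_snd fun _ hp => hp.2.1)).inner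
    (continuous_fst.sub continuous_snd).continuousOn

theorem inner_add_inner_le_of_strictMinOn
    (hyp3 : ∀ x ∈ Od d, ∀ y ∈ Od d, ∀ p q : Euc d,
      0 ≤ ⟪G x p - G y q, x - y⟫ + ⟪F x p - F y q, p - q⟫)
    {U W : Euc d → Euc d} {R : ℝ} (hU : MasterIneqOnBall d k F G r lam T U R)
    (hW : MasterIneqOnBall d k F G r lam T W R) {x₀ y₀ w₁ w₂ : Euc d}
    (hx₀ : x₀ ∈ Ball1 d R) (hy₀ : y₀ ∈ Ball1 d R)
    (hUx₀ : leJump d k (U x₀) (U x₀)) (hWy₀ : leJump d k (W y₀) (W y₀))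
    (hw₁ : ∀ i j, k i j ≠ ⊤ → w₁ j ≤ w₁ i) (hw₂ : ∀ i j, k i j ≠ ⊤ → w₂ j ≤ w₂ i)
    (hmin : ∀ q ∈ Ball1 d R ×ˢ Ball1 d R, q ≠ (x₀, y₀) →
      crossPairing U W (x₀, y₀) + (⟪w₁, x₀⟫ + ⟪w₂, y₀⟫) <
        crossPairing U W q + (⟪w₁, q.1⟫ + ⟪w₂, q.2⟫)) :
    ⟪F x₀ (U x₀), w₁⟫ + ⟪F y₀ (W y₀), w₂⟫ ≤
      (r + lam) * crossPairing U W (x₀, y₀) - lam * crossPairing U W (T x₀, T y₀) := by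
  have hUineq := hU (W y₀ - w₁) (leJump_sub hWy₀ hw₁) y₀ hy₀.1 x₀ hx₀ fun x hx hne => by
    have h := hmin (x, y₀) ⟨hx, hy₀⟩ (by simpa using hne)
    simp only [crossPairing, inner_sub_left, inner_sub_right] at h ⊢
    linarith
  have hWineq := hW (U x₀ - w₂) (leJump_sub hUx₀ hw₂) x₀ hx₀.1 y₀ hy₀ fun y hy hne => by
    have h := hmin (x₀, y) ⟨hx₀, hy⟩ (by simpa using hne)
    simp only [crossPairing, inner_sub_left, inner_sub_right, real_inner_comm] at h ⊢
    linarith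
  have hmono := hyp3 x₀ hx₀.1 y₀ hy₀.1 (U x₀) (W y₀)
  simp only [crossPairing, inner_sub_left, inner_sub_right,
    ContinuousLinearMap.adjoint_inner_left] at hUineq hWineq hmono ⊢
  linarith [real_inner_comm (W y₀) (U x₀)]

theorem mul_crossPairing_ge_of_isMinOn
    (hyp3 : ∀ x ∈ Od d, ∀ y ∈ Od d, ∀ p q : Euc d,
      0 ≤ ⟪G x p - G y q, x - y⟫ + ⟪F x p - F y q, p - q⟫)
    (hyp7 : ∀ (n : ℕ) (s : ℕ → Fin d), s (n + 1) = s 0 →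
      (∀ m ≤ n, k (s m) (s (m + 1)) ≠ ⊤) → ∀ m ≤ n + 1, s m = s 0)
    (hr : 0 ≤ r) (hlam : 0 ≤ lam) {R₀ R : ℝ} {U W : Euc d → Euc d}
    (hU : IsMonotoneSolIC d k F G r lam T R₀ U) (hW : IsMonotoneSolIC d k F G r lam T R₀ W)
    (hUR : MasterIneqOnBall d k F G r lam T U R) (hWR : MasterIneqOnBall d k F G r lam T W R)
    (hT : Set.MapsTo T (Ball1 d R) (Ball1 d R)) {M : ℝ}
    (hFU : ∀ x ∈ Ball1 d R, ‖F x (U x)‖ ≤ M) (hFW : ∀ x ∈ Ball1 d R, ‖F x (W x)‖ ≤ M)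
    {pm : Euc d × Euc d} (hpm : pm ∈ Ball1 d R ×ˢ Ball1 d R)
    (hmin : IsMinOn (crossPairing U W) (Ball1 d R ×ˢ Ball1 d R) pm) {η : ℝ} (hη : 0 < η) :
    -((2 * M + 4 * R * (r + lam)) * η) ≤ r * crossPairing U W pm := by
  obtain ⟨c, ε, hε, hc⟩ :=
    exists_ball_subset_strictAnti_of_acyclic (not_transGen_self_of_no_cycle hyp7) hη
  obtain ⟨w₁, w₂, hw₁, hw₂, ⟨x₀, y₀⟩, hp, hpmin⟩ := exists_strictMinOn_add_inner_prod
    ((isCompact_Ball1 d R).prod (isCompact_Ball1 d R)) ⟨pm, hpm⟩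
    (continuousOn_crossPairing hU.1 hW.1) c c hε
  obtain ⟨hw₁η, hw₁adm⟩ := hc w₁ (by rwa [Metric.mem_ball, dist_eq_norm])
  obtain ⟨hw₂η, hw₂adm⟩ := hc w₂ (by rwa [Metric.mem_ball, dist_eq_norm])
  have hadm : ∀ w : Euc d, (∀ i j, i ≠ j ∧ k i j ≠ ⊤ → w j < w i) →
      ∀ i j, k i j ≠ ⊤ → w j ≤ w i := fun w hw i j hk =>
    (eq_or_ne i j).elim (fun h => h ▸ le_rfl) fun h => (hw i j ⟨h, hk⟩).le
  have hsmall : ∀ w : Euc d, ‖w‖ < η → ∀ x ∈ Ball1 d R, |⟪w, x⟫| ≤ η * R := fun w hw x hx =>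
    (abs_real_inner_le_norm w x).trans
      (mul_le_mul hw.le (norm_le_of_mem_Ball1 hx) (norm_nonneg _) hη.le)
  have hnear : crossPairing U W (x₀, y₀) ≤ crossPairing U W pm + 4 * R * η := by
    have h : crossPairing U W (x₀, y₀) + (⟪w₁, x₀⟫ + ⟪w₂, y₀⟫) ≤
        crossPairing U W pm + (⟪w₁, pm.1⟫ + ⟪w₂, pm.2⟫) := by
      rcases eq_or_ne pm (x₀, y₀) with rfl | hne
      · rfl
      · exact (hpmin pm hpm hne).le
    linarith [abs_le.mp (hsmall w₁ hw₁η x₀ hp.1), abs_le.mp (hsmall w₂ hw₂η y₀ hp.2),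
      abs_le.mp (hsmall w₁ hw₁η pm.1 hpm.1), abs_le.mp (hsmall w₂ hw₂η pm.2 hpm.2)]
  have hTmin : crossPairing U W pm ≤ crossPairing U W (T x₀, T y₀) := hmin ⟨hT hp.1, hT hp.2⟩
  have hdoubling := inner_add_inner_le_of_strictMinOn hyp3 hUR hWR hp.1 hp.2
    (hU.2.1 x₀ hp.1.1) (hW.2.1 y₀ hp.2.1) (hadm w₁ hw₁adm) (hadm w₂ hw₂adm) hpmin
  have hM : 0 ≤ M := (norm_nonneg _).trans (hFU x₀ hp.1)
  have hF₁ : |⟪F x₀ (U x₀), w₁⟫| ≤ M * η := (abs_real_inner_le_norm _ _).trans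
    (mul_le_mul (hFU x₀ hp.1) hw₁η.le (norm_nonneg _) hM)
  have hF₂ : |⟪F y₀ (W y₀), w₂⟫| ≤ M * η := (abs_real_inner_le_norm _ _).trans
    (mul_le_mul (hFW y₀ hp.2) hw₂η.le (norm_nonneg _) hM)
  linarith [mul_le_mul_of_nonneg_left hnear (add_nonneg hr hlam),
    mul_le_mul_of_nonneg_left hTmin hlam, abs_le.mp hF₁, abs_le.mp hF₂]

theorem inner_sub_nonneg_of_isMonotoneSolIC
    (hFc : Continuous fun q : Euc d × Euc d => F q.1 q.2) (hr : 0 < r) (hlam : 0 ≤ lam)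
    {R₀ : ℝ} (hyp2T : ∀ R ≥ R₀, ∀ x ∈ Ball1 d R, T x ∈ Ball1 d R)
    (hyp3 : ∀ x ∈ Od d, ∀ y ∈ Od d, ∀ p q : Euc d,
      0 ≤ ⟪G x p - G y q, x - y⟫ + ⟪F x p - F y q, p - q⟫)
    (hyp7 : ∀ (n : ℕ) (s : ℕ → Fin d), s (n + 1) = s 0 →
      (∀ m ≤ n, k (s m) (s (m + 1)) ≠ ⊤) → ∀ m ≤ n + 1, s m = s 0)
    {U W : Euc d → Euc d} (hU : IsMonotoneSolIC d k F G r lam T R₀ U)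
    (hW : IsMonotoneSolIC d k F G r lam T R₀ W) {a b : Euc d} (ha : a ∈ Od d) (hb : b ∈ Od d) :
    0 ≤ ⟪U a - W b, a - b⟫ := by
  obtain ⟨R₁, hR₁, hUR⟩ := hU.2.2
  obtain ⟨R₂, -, hWR⟩ := hW.2.2
  set R := max (max R₁ R₂) (max (∑ i, a i) (∑ i, b i))
  have hab : (a, b) ∈ Ball1 d R ×ˢ Ball1 d R :=
    ⟨⟨ha, le_max_of_le_right (le_max_left _ _)⟩, ⟨hb, le_max_of_le_right (le_max_right _ _)⟩⟩
  have hB := isCompact_Ball1 d R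
  obtain ⟨pm, hpm, hmin⟩ := (hB.prod hB).exists_isMinOn ⟨_, hab⟩
    (continuousOn_crossPairing hU.1 hW.1)
  obtain ⟨M₁, hM₁⟩ := hB.exists_bound_of_continuousOn
    (hFc.comp_continuousOn (continuousOn_id.prodMk (hU.1.mono fun _ hx => hx.1)))
  obtain ⟨M₂, hM₂⟩ := hB.exists_bound_of_continuousOn
    (hFc.comp_continuousOn (continuousOn_id.prodMk (hW.1.mono fun _ hx => hx.1)))
  have hRU : R₁ ≤ R := le_max_of_le_left (le_max_left _ _)
  have hRW : R₂ ≤ R := le_max_of_le_left (le_max_right _ _)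
  have hbound : ∀ η > 0, -((2 * max M₁ M₂ + 4 * R * (r + lam)) * η) ≤ r * crossPairing U W pm :=
    fun η hη => mul_crossPairing_ge_of_isMinOn hyp3 hyp7 hr.le hlam hU hW (hUR R hRU)
      (hWR R hRW) (fun x hx => hyp2T R (hR₁.trans hRU) x hx)
      (fun x hx => (hM₁ x hx).trans (le_max_left _ _))
      (fun x hx => (hM₂ x hx).trans (le_max_right _ _)) hpm hmin hη
  have hlim : Tendsto (fun η => -((2 * max M₁ M₂ + 4 * R * (r + lam)) * η)) (𝓝[>] 0) (𝓝 0) :=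
    ((continuous_const.mul continuous_id).neg.tendsto' 0 0 (by simp)).mono_left
      nhdsWithin_le_nhds
  have hμ : 0 ≤ crossPairing U W pm := (mul_nonneg_iff_of_pos_left hr).mp
    (le_of_tendsto hlim (eventually_nhdsWithin_of_forall fun η (hη : 0 < η) => hbound η hη))
  exact hμ.trans (hmin hab)

end MasterEquation

theorem uniqueness_and_monotonicity_monotone_impulse_control_general
    (d : ℕ) (k : Fin d → Fin d → EReal) (F G : Euc d → Euc d → Euc d)
    (hFc : Continuous fun q : Euc d × Euc d => F q.1 q.2)
    (r lam : ℝ) (hr : 0 < r) (hlam : 0 ≤ lam) (T : Euc d →L[ℝ] Euc d)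
    -- Hypothesis 2
    (R₀ : ℝ) (hyp2T : ∀ R ≥ R₀, ∀ x ∈ Ball1 d R, T x ∈ Ball1 d R)
    -- Hypothesis 3
    (hyp3 : ∀ x ∈ Od d, ∀ y ∈ Od d, ∀ p q : Euc d,
      0 ≤ ⟪G x p - G y q, x - y⟫ + ⟪F x p - F y q, p - q⟫)
    -- Hypothesis 7: no nonconstant cycle of jumps with finite costs
    (hyp7 : ∀ (n : ℕ) (s : ℕ → Fin d), s (n + 1) = s 0 →
      (∀ m ≤ n, k (s m) (s (m + 1)) ≠ ⊤) → ∀ m ≤ n + 1, s m = s 0) :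
    (∀ U V : Euc d → Euc d, IsMonotoneSolIC d k F G r lam T R₀ U →
        IsMonotoneSolIC d k F G r lam T R₀ V → ∀ x ∈ Od d, U x = V x) ∧
    (∀ U : Euc d → Euc d, IsMonotoneSolIC d k F G r lam T R₀ U →
        ∀ x ∈ Od d, ∀ y ∈ Od d, 0 ≤ ⟪U x - U y, x - y⟫) := by
  have hmono : ∀ U W, IsMonotoneSolIC d k F G r lam T R₀ U →
      IsMonotoneSolIC d k F G r lam T R₀ W → ∀ x ∈ Od d, ∀ y ∈ Od d, 0 ≤ ⟪U x - W y, x - y⟫ :=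
    fun _ _ hU hW _ hx _ hy =>
      inner_sub_nonneg_of_isMonotoneSolIC hFc hr hlam hyp2T hyp3 hyp7 hU hW hx hy
  refine ⟨fun U V hU hV x hx => ?_, fun U hU => hmono U U hU hU⟩
  ext i
  exact le_antisymm (apply_le_of_forall_inner_nonneg (hV.1 x hx) (hmono U V hU hV x hx) hx i)
    (apply_le_of_forall_inner_nonneg (hU.1 x hx) (hmono V U hV hU x hx) hx i)

/-- Theorem 4.1: under Hypotheses 1-3 and 7, there is at most one monotone solution of the
master equation of the MFG of impulse control, and it is a monotone map. -/
theorem uniqueness_and_monotonicity_monotone_impulse_control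
    (d : ℕ) (hd : 1 ≤ d)
    (k : Fin d → Fin d → EReal) (hkpos : ∀ i j, 0 < k i j)
    (F G : Euc d → Euc d → Euc d)
    (hFc : Continuous fun q : Euc d × Euc d => F q.1 q.2)
    (hGc : Continuous fun q : Euc d × Euc d => G q.1 q.2)
    (r lam : ℝ) (hr : 0 < r) (hlam : 0 ≤ lam) (T : Euc d →L[ℝ] Euc d)
    -- Hypothesis 1
    (hyp1F : ∀ x ∈ Od d, ∀ p : Euc d, ∀ i, x i = 0 → F x p i ≤ 0)
    (hyp1T : ∀ x ∈ Od d, T x ∈ Od d)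
    -- Hypothesis 2
    (R₀ : ℝ) (hR₀ : 0 < R₀)
    (hyp2F : ∀ x ∈ Od d, ∀ p : Euc d, R₀ ≤ ∑ i, x i → 0 ≤ ∑ i, F x p i)
    (hyp2T : ∀ R ≥ R₀, ∀ x ∈ Ball1 d R, T x ∈ Ball1 d R)
    -- Hypothesis 3
    (hyp3 : ∀ x ∈ Od d, ∀ y ∈ Od d, ∀ p q : Euc d,
      0 ≤ ⟪G x p - G y q, x - y⟫ + ⟪F x p - F y q, p - q⟫)
    -- Hypothesis 7: no nonconstant cycle of jumps with finite costs
    (hyp7 : ∀ (n : ℕ) (s : ℕ → Fin d), s (n + 1) = s 0 →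
      (∀ m ≤ n, k (s m) (s (m + 1)) ≠ ⊤) → ∀ m ≤ n + 1, s m = s 0) :
    (∀ U V : Euc d → Euc d, IsMonotoneSolIC d k F G r lam T R₀ U →
        IsMonotoneSolIC d k F G r lam T R₀ V → ∀ x ∈ Od d, U x = V x) ∧
    (∀ U : Euc d → Euc d, IsMonotoneSolIC d k F G r lam T R₀ U →
        ∀ x ∈ Od d, ∀ y ∈ Od d, 0 ≤ ⟪U x - U y, x - y⟫) :=
  uniqueness_and_monotonicity_monotone_impulse_control_general d k F G hFc r lam hr hlam T R₀ hyp2T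
    hyp3 hyp7
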